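/- arXiv:1303.3671 — 6 statements merged into one kernel-verified Lean document; each statement's English description precedes it below -/
import Mathlib

section
/- Let D be a small category and let C be an abelian category having all colimits of shape D. Suppose that D-indexed homotopy colimits are well-defined in C, i.e., for any pair of functors F, G : D ⥤ C sending every morphism of D to a monomorphism, and any natural transformation φ : F → G such that φ(X) is a stable equivalence for every object X of D, the induced map colim F → colim G is a stable equivalence. Then for every functor F : D ⥤ C sending every morphism of D to a monomorphism and every object of D to a projective object, the colimit colim F is projective. -/
open CategoryTheory Limits ZeroObject

universe w v u

/-- A morphism factors through a projective object. -/
def FactorsThroughProjective {C : Type u} [Category.{v} C]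
    {X Y : C} (f : X ⟶ Y) : Prop :=
  ∃ (P : C) (_ : Projective P) (g : X ⟶ P) (h : P ⟶ Y), g ≫ h = f

/-- A morphism `f : X ⟶ Y` is a stable equivalence if there is `h : Y ⟶ X`
such that `h ∘ f` is stably equivalent to `id_X` and `f ∘ h` is stably
equivalent to `id_Y` (i.e. the differences factor through projectives). -/
def IsStableEquiv {C : Type u} [Category.{v} C] [Preadditive C]
    {X Y : C} (f : X ⟶ Y) : Prop :=
  ∃ h : Y ⟶ X, FactorsThroughProjective (f ≫ h - 𝟙 X) ∧
    FactorsThroughProjective (h ≫ f - 𝟙 Y)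

/-- The colimit of the constant functor at `0` is projective. -/
lemma projective_colimit_const_zero
    {D : Type w} [SmallCategory D]
    {C : Type u} [Category.{v} C] [Abelian C] [HasColimitsOfShape D C] :
    Projective (colimit ((Functor.const D).obj (0 : C))) := by
  constructor
  intro E X f e he
  refine ⟨colimit.desc _ ⟨E, { app := fun j => 0 }⟩, ?_⟩
  apply colimit.hom_ext
  intro j
  apply (IsZero.of_iso (isZero_zero C) (Iso.refl _)).eq_of_src

/-- Let `D` be a small category and `C` an abelian category
with all colimits of shape `D`.  If `D`-indexed homotopy colimits are
well-defined in `C` (any levelwise stable equivalence between `D`-diagrams all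
of whose maps are monomorphisms induces a stable equivalence of colimits),
then the colimit of any `D`-diagram of projective objects all of whose maps
are monomorphisms is projective. -/
theorem colimit_projective_of_homotopy_colimits_well_defined
    {D : Type w} [SmallCategory D]
    {C : Type u} [Category.{v} C] [Abelian C] [HasColimitsOfShape D C]
    (H : ∀ (F G : D ⥤ C) (φ : F ⟶ G),
      (∀ {A B : D} (u : A ⟶ B), Mono (F.map u)) →
      (∀ {A B : D} (u : A ⟶ B), Mono (G.map u)) →
      (∀ A : D, IsStableEquiv (φ.app A)) →
      IsStableEquiv (colimMap φ)) :
    ∀ F : D ⥤ C, (∀ {A B : D} (u : A ⟶ B), Mono (F.map u)) →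
      (∀ A : D, Projective (F.obj A)) → Projective (colimit F) := by
  intro F hmono hproj
  set G : D ⥤ C := (Functor.const D).obj (0 : C) with hG
  have hGzero : ∀ A : D, IsZero (G.obj A) := fun A => isZero_zero C
  have hGmono : ∀ {A B : D} (u : A ⟶ B), Mono (G.map u) := by
    intro A B u
    show Mono (𝟙 (0 : C))
    infer_instance
  let φ : F ⟶ G := { app := fun A => 0, naturality := by intro A B u; simp }
  have hst : ∀ A : D, IsStableEquiv (φ.app A) := by
    intro A
    refine ⟨0, ⟨F.obj A, hproj A, -𝟙 _, 𝟙 _, by simp⟩,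
      ⟨G.obj A, ?_, 𝟙 _, 0, ?_⟩⟩
    · constructor
      intro E X f e he
      exact ⟨0, by apply (hGzero A).eq_of_src⟩
    · apply (hGzero A).eq_of_src
  obtain ⟨h0, ⟨P, hP, g, k, hgk⟩, -⟩ := H F G φ hmono hGmono hst
  constructor
  intro E X m e he
  obtain ⟨a, ha⟩ := (projective_colimit_const_zero (D := D) (C := C)).factors (h0 ≫ m) e
  obtain ⟨b, hb⟩ := hP.factors (k ≫ m) e
  refine ⟨colimMap φ ≫ a - g ≫ b, ?_⟩
  have : (colimMap φ ≫ h0 - g ≫ k) ≫ m = m := by rw [hgk]; simp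
  calc (colimMap φ ≫ a - g ≫ b) ≫ e
      = colimMap φ ≫ a ≫ e - g ≫ b ≫ e := by simp
    _ = colimMap φ ≫ h0 ≫ m - g ≫ k ≫ m := by rw [ha, hb]
    _ = (colimMap φ ≫ h0 - g ≫ k) ≫ m := by simp
    _ = m := this
end

section
/- Let C be an abelian category with enough projectives, and suppose X is an object of C of projective dimension exactly 1, with projective resolution 0 → P_1 →^s P_0 → X → 0 (so P_0, P_1 are projective and s is a monomorphism). Consider the commutative diagram whose top row is the span P_1 ←^{id} P_1 →^{id} P_1, whose bottom row is the span P_0 ←^s P_1 →^s P_0, and whose vertical maps are s, id_{P_1}, s. Every horizontal map in this diagram is a monomorphism and every vertical map is a stable equivalence, but the induced map of pushouts P_1 ⊔_{P_1} P_1 → P_0 ⊔_{P_1} P_0 is not a stable equivalence. In particular, homotopy pushouts fail to be well-defined in any abelian category with enough projectives containing an object of positive finite projective dimension. -/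
open CategoryTheory Limits

/-! A stable equivalence with projective source has projective target, and the cokernel of
`s : P₁ ⟶ P₀` is a retract of `P₀ ⊔_{P₁} P₀`. Hence if the map `P₁ ≅ P₁ ⊔_{P₁} P₁ ⟶ P₀ ⊔_{P₁} P₀`
were a stable equivalence, `X = coker s` would be projective. -/

universe v u

section

variable {C : Type u} [Category.{v} C]

lemma factorsThroughProjective_of_projective {X Y : C} (hX : Projective X) (f : X ⟶ Y) :
    FactorsThroughProjective f :=
  ⟨X, hX, 𝟙 X, f, Category.id_comp f⟩

lemma projective_of_factorsThroughProjective_id {Y : C} (h : FactorsThroughProjective (𝟙 Y)) :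
    Projective Y := by
  obtain ⟨P, hP, i, r, hir⟩ := h
  exact Retract.projective (p := hP) ⟨i, r, hir⟩

lemma FactorsThroughProjective.sub [Preadditive C] [HasBinaryBiproducts C] {X Y : C}
    {f f' : X ⟶ Y} (hf : FactorsThroughProjective f) (hf' : FactorsThroughProjective f') :
    FactorsThroughProjective (f - f') := by
  obtain ⟨P, hP, g, h, rfl⟩ := hf
  obtain ⟨P', hP', g', h', rfl⟩ := hf'
  exact ⟨P ⊞ P', inferInstance, biprod.lift g g', biprod.desc h (-h'), by simp [sub_eq_add_neg]⟩

lemma isStableEquiv_of_projective [Preadditive C] {X Y : C} (hX : Projective X)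
    (hY : Projective Y) (f : X ⟶ Y) : IsStableEquiv f :=
  ⟨0, factorsThroughProjective_of_projective hX _, factorsThroughProjective_of_projective hY _⟩

lemma projective_of_isStableEquiv [Preadditive C] [HasBinaryBiproducts C] {X Y : C}
    (hX : Projective X) {f : X ⟶ Y} (hf : IsStableEquiv f) : Projective Y := by
  obtain ⟨h, -, hfh⟩ := hf
  apply projective_of_factorsThroughProjective_id
  simpa only [sub_sub_cancel] using FactorsThroughProjective.sub ⟨X, hX, h, f, rfl⟩ hfh

lemma projective_pushout_id {P : C} (hP : Projective P) [HasPushout (𝟙 P) (𝟙 P)] :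
    Projective (pushout (𝟙 P) (𝟙 P)) :=
  Projective.of_iso (asIso (pushout.inl (𝟙 P) (𝟙 P))) hP

noncomputable def retractPushoutOfIsCokernel [Preadditive C] {A B X : C} {s : A ⟶ B}
    {π : B ⟶ X} {w : s ≫ π = 0} (hπ : IsColimit (CokernelCofork.ofπ π w)) [HasPushout s s] :
    Retract X (pushout s s) where
  i := (CokernelCofork.IsColimit.desc' hπ (pushout.inr s s - pushout.inl s s)
    (by simp [Preadditive.comp_sub, pushout.condition])).1
  r := pushout.desc 0 π (by simp [w])
  retract := by
    apply Cofork.IsColimit.hom_ext hπ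
    rw [← Category.assoc, (CokernelCofork.IsColimit.desc' hπ _ _).2]
    simp only [Preadditive.sub_comp, pushout.inr_desc, pushout.inl_desc, sub_zero]
    simp

end

/-- Let `C` be an abelian category with enough projectives,
and let `X` be an object of projective dimension exactly `1`, with projective
resolution `0 → P₁ →ˢ P₀ → X → 0` (so `P₀`, `P₁` are projective, `s` is a
monomorphism and `X` is not projective).  In the commutative diagram whose top
row is the span `P₁ ← P₁ → P₁` (identities), whose bottom row is the span
`P₀ ←ˢ P₁ →ˢ P₀`, and whose vertical maps are `s`, `id`, `s`, every horizontal
map is a monomorphism and every vertical map is a stable equivalence, but the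
induced map of pushouts `P₁ ⊔_{P₁} P₁ ⟶ P₀ ⊔_{P₁} P₀` is not a stable
equivalence. -/
theorem homotopy_pushouts_not_well_defined
    {C : Type u} [Category.{v} C] [Abelian C]
    {X P₀ P₁ : C} (hP₀ : Projective P₀) (hP₁ : Projective P₁)
    (hX : ¬ Projective X)
    (s : P₁ ⟶ P₀) (π : P₀ ⟶ X) (w : s ≫ π = 0)
    (hse : (ShortComplex.mk s π w).ShortExact) :
    (Mono s ∧ Mono (𝟙 P₁)) ∧
    (IsStableEquiv s ∧ IsStableEquiv (𝟙 P₁)) ∧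
    ¬ IsStableEquiv (pushout.map (𝟙 P₁) (𝟙 P₁) s s s s (𝟙 P₁)
        (by simp) (by simp)) := by
  refine ⟨⟨hse.mono_f, inferInstance⟩,
    ⟨isStableEquiv_of_projective hP₁ hP₀ s, isStableEquiv_of_projective hP₁ hP₁ _⟩,
    fun hequiv => hX ?_⟩
  have hpushout : Projective (pushout s s) :=
    projective_of_isStableEquiv (projective_pushout_id hP₁) hequiv
  exact (retractPushoutOfIsCokernel hse.gIsCokernel).projective
end

section
/- Let C be an abelian category with enough projectives and enough injectives, and suppose that every projective object of C is injective. Then for any monomorphism f : X ⟶ Y and any stable equivalence g : X ⟶ Z in C, the pushout map Y ⟶ Y ⊔_X Z (the canonical map from Y to the pushout of g along f) is also a stable equivalence. -/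
open CategoryTheory Limits

universe v u

/-- Sums of morphisms factoring through projectives factor through a projective. -/
lemma ftp_add {C : Type u} [Category.{v} C] [Preadditive C] [HasBinaryBiproducts C]
    {X Y : C} {f f' : X ⟶ Y} (hf : FactorsThroughProjective f)
    (hf' : FactorsThroughProjective f') : FactorsThroughProjective (f + f') := by
  obtain ⟨P, hP, a, b, hab⟩ := hf
  obtain ⟨P', hP', a', b', hab'⟩ := hf'
  haveI := hP; haveI := hP'
  exact ⟨P ⊞ P', inferInstance, biprod.lift a a', biprod.desc b b',
    by rw [biprod.lift_desc, hab, hab']⟩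

/-- left properness.  Let `C` be an abelian category with
enough projectives and enough injectives in which every projective object is
injective.  For any monomorphism `f : X ⟶ Y` and any stable equivalence
`g : X ⟶ Z`, the canonical map `Y ⟶ Y ⊔_X Z` to the pushout of `g` along `f`
is a stable equivalence. -/
theorem left_properness
    {C : Type u} [Category.{v} C] [Abelian C] [EnoughProjectives C]
    [EnoughInjectives C]
    (hPI : ∀ P : C, Projective P → Injective P)
    {X Y Z : C} (f : X ⟶ Y) (g : X ⟶ Z) [Mono f] (hg : IsStableEquiv g) :
    IsStableEquiv (pushout.inl f g) := by
  obtain ⟨h, ⟨P, hP, p₀, q, hpq⟩, ⟨Q, hQ, r, s, hrs⟩⟩ := hg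
  haveI := hP; haveI := hQ
  haveI : Injective P := hPI P hP
  set p : X ⟶ P := -p₀ with hpdef
  have hpq' : p ≫ q = 𝟙 X - g ≫ h := by
    rw [hpdef, Preadditive.neg_comp, hpq]; abel
  set σ : X ⟶ Z ⊞ P := biprod.lift g p with hσdef
  set ρ : Z ⊞ P ⟶ X := biprod.desc h q with hρdef
  have hσρ : σ ≫ ρ = 𝟙 X := by
    rw [hσdef, hρdef, biprod.lift_desc, hpq']; abel
  set j1 : Y ⟶ pushout f σ := pushout.inl f σ with hj1def
  set j2 : Z ⊞ P ⟶ pushout f σ := pushout.inr f σ with hj2def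
  have hfj1 : f ≫ j1 = σ ≫ j2 := pushout.condition
  haveI : Mono j2 := by rw [hj2def]; infer_instance
  set μ : P ⟶ pushout f σ := biprod.inr ≫ j2 with hμdef
  haveI : Mono μ := by rw [hμdef]; exact mono_comp _ _
  set ρ1 : pushout f σ ⟶ P := Injective.factorThru (𝟙 P) μ with hρ1def
  have hμρ1 : μ ≫ ρ1 = 𝟙 P := Injective.comp_factorThru _ _
  -- θ : pushout f σ ⟶ pushout f g
  have hθc : f ≫ pushout.inl f g
      = σ ≫ biprod.desc (pushout.inr f g) (0 : P ⟶ pushout f g) := by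
    rw [hσdef, biprod.lift_desc, comp_zero, add_zero, pushout.condition]
  set θ : pushout f σ ⟶ pushout f g :=
    pushout.desc (pushout.inl f g) (biprod.desc (pushout.inr f g) 0) hθc with hθdef
  have hj1θ : j1 ≫ θ = pushout.inl f g := pushout.inl_desc _ _ _
  have hj2θ : j2 ≫ θ = biprod.desc (pushout.inr f g) 0 := pushout.inr_desc _ _ _
  have hμθ : μ ≫ θ = 0 := by
    rw [hμdef, Category.assoc, hj2θ, biprod.inr_desc]
  -- ρY : pushout f σ ⟶ Y, retraction of j1
  have hρYc : f ≫ 𝟙 Y = σ ≫ (ρ ≫ f) := by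
    rw [Category.comp_id, ← Category.assoc, hσρ, Category.id_comp]
  set ρY : pushout f σ ⟶ Y := pushout.desc (𝟙 Y) (ρ ≫ f) hρYc with hρYdef
  have hj1ρY : j1 ≫ ρY = 𝟙 Y := pushout.inl_desc _ _ _
  have hj2ρY : j2 ≫ ρY = ρ ≫ f := pushout.inr_desc _ _ _
  -- e : the idempotent onto the complement of `X` in `Z ⊞ P`
  set e : Z ⊞ P ⟶ Z ⊞ P := 𝟙 (Z ⊞ P) - ρ ≫ σ with hedef
  have hσe : σ ≫ e = 0 := by
    rw [hedef, Preadditive.comp_sub, Category.comp_id, ← Category.assoc, hσρ,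
      Category.id_comp, sub_self]
  have hee : e ≫ e = e := by
    have hρσρσ : (ρ ≫ σ) ≫ ρ ≫ σ = ρ ≫ σ := by
      rw [Category.assoc, ← Category.assoc σ ρ σ, hσρ, Category.id_comp]
    rw [hedef]
    simp only [Preadditive.sub_comp, Preadditive.comp_sub, Category.id_comp,
      Category.comp_id]
    rw [hρσρσ]
    abel
  have hesum : e = biprod.fst ≫ ((-(r ≫ s)) ≫ biprod.inl)
      + (biprod.fst ≫ (-(h ≫ p))) ≫ biprod.inr
      + biprod.snd ≫ (biprod.inr - q ≫ σ) := by
    rw [hedef, hσdef, hρdef, hrs]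
    apply biprod.hom_ext' <;>
      simp [biprod.lift_eq, Preadditive.comp_sub, Preadditive.sub_comp,
        Preadditive.comp_add, Preadditive.add_comp, Preadditive.neg_comp,
        Preadditive.comp_neg] <;> abel
  have he : FactorsThroughProjective e := by
    rw [hesum]
    refine ftp_add (ftp_add ⟨Q, hQ, biprod.fst ≫ (-r), s ≫ biprod.inl, ?_⟩
      ⟨P, hP, biprod.fst ≫ (-(h ≫ p)), biprod.inr, rfl⟩)
      ⟨P, hP, biprod.snd, biprod.inr - q ≫ σ, rfl⟩
    simp only [Category.assoc, Preadditive.neg_comp, Preadditive.comp_neg]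
  obtain ⟨R, hR, A, B, hAB⟩ := he
  have hαc : f ≫ (0 : Y ⟶ R) = σ ≫ (e ≫ A) := by
    rw [comp_zero, ← Category.assoc, hσe, zero_comp]
  set α : pushout f σ ⟶ R := pushout.desc 0 (e ≫ A) hαc with hαdef
  have hj1α : j1 ≫ α = 0 := pushout.inl_desc _ _ _
  have hj2α : j2 ≫ α = e ≫ A := pushout.inr_desc _ _ _
  -- the idempotent complementary to the retract `Y` of `pushout f σ`
  have he_j2 : j2 ≫ (𝟙 (pushout f σ) - ρY ≫ j1) = e ≫ j2 := by
    rw [Preadditive.comp_sub, Category.comp_id, ← Category.assoc, hj2ρY,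
      Category.assoc, hfj1, hedef, Preadditive.sub_comp, Category.id_comp,
      Category.assoc]
  have hc : 𝟙 (pushout f σ) - ρY ≫ j1 = α ≫ (B ≫ j2) := by
    apply pushout.hom_ext
    · rw [Preadditive.comp_sub, Category.comp_id, ← Category.assoc, hj1ρY,
        Category.id_comp, sub_self, ← Category.assoc, hj1α, zero_comp]
    · rw [he_j2, ← Category.assoc, hj2α]
      rw [Category.assoc, ← Category.assoc A B j2, hAB, ← Category.assoc, hee]
  -- ψ : the idempotent complementary to `P` in `pushout f σ`, and the section w
  set ψ : pushout f σ ⟶ pushout f σ := 𝟙 _ - ρ1 ≫ μ with hψdef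
  have hμψ : μ ≫ ψ = 0 := by
    rw [hψdef, Preadditive.comp_sub, Category.comp_id, ← Category.assoc, hμρ1,
      Category.id_comp, sub_self]
  have hσsplit : σ = g ≫ biprod.inl + p ≫ biprod.inr := by
    rw [hσdef, biprod.lift_eq]
  have hwc : f ≫ (j1 ≫ ψ) = g ≫ (biprod.inl ≫ j2 ≫ ψ) := by
    have hσj2ψ : σ ≫ j2 ≫ ψ = g ≫ biprod.inl ≫ j2 ≫ ψ := by
      have h1 : σ ≫ j2 ≫ ψ = (g ≫ biprod.inl + p ≫ biprod.inr) ≫ j2 ≫ ψ := by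
        rw [← hσsplit]
      rw [h1, Preadditive.add_comp]
      simp only [Category.assoc]
      rw [← Category.assoc biprod.inr j2 ψ, ← hμdef, hμψ, comp_zero, add_zero]
    rw [← Category.assoc, hfj1, Category.assoc, hσj2ψ]
  set w : pushout f g ⟶ pushout f σ :=
    pushout.desc (j1 ≫ ψ) (biprod.inl ≫ j2 ≫ ψ) hwc with hwdef
  have hinlw : pushout.inl f g ≫ w = j1 ≫ ψ := pushout.inl_desc _ _ _
  have hinrw : pushout.inr f g ≫ w = biprod.inl ≫ j2 ≫ ψ := pushout.inr_desc _ _ _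
  have hwθ : w ≫ θ = 𝟙 (pushout f g) := by
    apply pushout.hom_ext
    · rw [← Category.assoc, hinlw, Category.assoc, hψdef, Preadditive.sub_comp,
        Category.id_comp, Category.assoc, hμθ, comp_zero,
        Preadditive.comp_sub, comp_zero, sub_zero, hj1θ, Category.comp_id]
    · rw [← Category.assoc, hinrw, Category.assoc, Category.assoc, hψdef,
        Preadditive.sub_comp, Category.id_comp, Category.assoc, hμθ, comp_zero,
        Preadditive.comp_sub, Preadditive.comp_sub, comp_zero, comp_zero, sub_zero,
        hj2θ, biprod.inl_desc, Category.comp_id]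
  have hθw : θ ≫ w = ψ := by
    apply pushout.hom_ext
    · rw [← Category.assoc, hj1θ, hinlw]
    · rw [← Category.assoc, hj2θ]
      apply biprod.hom_ext'
      · rw [← Category.assoc, biprod.inl_desc, hinrw, ← Category.assoc]
      · rw [← Category.assoc, biprod.inr_desc, zero_comp,
          ← Category.assoc, ← hμdef, hμψ]
  refine ⟨w ≫ ρY, ⟨P, hP, -(j1 ≫ ρ1), μ ≫ ρY, ?_⟩,
    ⟨R, hR, -(w ≫ α), B ≫ j2 ≫ θ, ?_⟩⟩
  · -- inl ≫ (w ≫ ρY) - 𝟙 Y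
    have h1 : pushout.inl f g ≫ w ≫ ρY = 𝟙 Y - (j1 ≫ ρ1) ≫ (μ ≫ ρY) := by
      rw [← Category.assoc, hinlw, Category.assoc, hψdef]
      rw [Preadditive.sub_comp, Category.id_comp, Preadditive.comp_sub, hj1ρY]
      simp only [Category.assoc]
    rw [h1, Preadditive.neg_comp]
    abel
  · -- (w ≫ ρY) ≫ inl - 𝟙 (pushout f g)
    have h2 : (w ≫ ρY) ≫ pushout.inl f g = 𝟙 (pushout f g) - (w ≫ α) ≫ (B ≫ j2 ≫ θ) := by
      have hρYj1 : ρY ≫ j1 = 𝟙 (pushout f σ) - α ≫ (B ≫ j2) := by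
        rw [← hc]; abel
      rw [← hj1θ]
      calc (w ≫ ρY) ≫ j1 ≫ θ = w ≫ (ρY ≫ j1) ≫ θ := by simp only [Category.assoc]
        _ = w ≫ (𝟙 (pushout f σ) - α ≫ (B ≫ j2)) ≫ θ := by rw [hρYj1]
        _ = w ≫ θ - (w ≫ α) ≫ (B ≫ j2 ≫ θ) := by
              simp only [Preadditive.sub_comp, Preadditive.comp_sub, Category.id_comp,
                Category.assoc]
        _ = 𝟙 (pushout f g) - (w ≫ α) ≫ (B ≫ j2 ≫ θ) := by rw [hwθ]
    rw [h2, Preadditive.neg_comp]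
    abel
end

section
/- Let C be an abelian category with enough projectives and enough injectives, and suppose that every projective object of C is injective. Given a commutative diagram in C with rows the spans X' ← Y' → Z' and X ← Y → Z and vertical maps X' → X, Y' → Y, Z' → Z, such that all four horizontal maps Y' → X', Y' → Z', Y → X, Y → Z are monomorphisms and all three vertical maps are stable equivalences, the induced map of pushouts X' ⊔_{Y'} Z' → X ⊔_Y Z is a stable equivalence. -/
open CategoryTheory Limits

universe v u

set_option linter.unusedSectionVars false

section Aux

variable {C : Type u} [Category.{v} C] [Abelian C]

lemma ftp_of_eq {X Y : C} {f g : X ⟶ Y} (h : FactorsThroughProjective f) (e : f = g) :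
    FactorsThroughProjective g := e ▸ h

open ZeroObject in
lemma ftp_zero {X Y : C} : FactorsThroughProjective (0 : X ⟶ Y) :=
  ⟨(0 : C), inferInstance, 0, 0, by simp⟩

lemma ftp_fac {X P Y : C} (hP : Projective P) (g : X ⟶ P) (h : P ⟶ Y) :
    FactorsThroughProjective (g ≫ h) := ⟨P, hP, g, h, rfl⟩

lemma ftp_precomp {X Y Z : C} {f : Y ⟶ Z} (h : FactorsThroughProjective f) (e : X ⟶ Y) :
    FactorsThroughProjective (e ≫ f) := by
  obtain ⟨P, hP, g, k, rfl⟩ := h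
  exact ⟨P, hP, e ≫ g, k, by simp⟩

lemma ftp_postcomp {X Y Z : C} {f : X ⟶ Y} (h : FactorsThroughProjective f) (e : Y ⟶ Z) :
    FactorsThroughProjective (f ≫ e) := by
  obtain ⟨P, hP, g, k, rfl⟩ := h
  exact ⟨P, hP, g, k ≫ e, by simp⟩

lemma ftp_neg {X Y : C} {f : X ⟶ Y} (h : FactorsThroughProjective f) :
    FactorsThroughProjective (-f) := by
  obtain ⟨P, hP, g, k, rfl⟩ := h
  exact ⟨P, hP, -g, k, by simp⟩

lemma ftp_add_s11 {X Y : C} {f g : X ⟶ Y} (hf : FactorsThroughProjective f)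
    (hg : FactorsThroughProjective g) : FactorsThroughProjective (f + g) := by
  obtain ⟨P, hP, u, v, rfl⟩ := hf
  obtain ⟨Q, hQ, u', v', rfl⟩ := hg
  haveI := hP; haveI := hQ
  exact ⟨P ⊞ Q, inferInstance, biprod.lift u u', biprod.desc v v', by
    simp [biprod.lift_desc]⟩

lemma se_comp {X Y Z : C} {f : X ⟶ Y} {g : Y ⟶ Z} (hf : IsStableEquiv f)
    (hg : IsStableEquiv g) : IsStableEquiv (f ≫ g) := by
  obtain ⟨f', hf1, hf2⟩ := hf
  obtain ⟨g', hg1, hg2⟩ := hg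
  refine ⟨g' ≫ f',
    ftp_of_eq (ftp_add_s11 (ftp_precomp (ftp_postcomp hg1 f') f) hf1) ?_,
    ftp_of_eq (ftp_add_s11 (ftp_precomp (ftp_postcomp hf2 g) g') hg2) ?_⟩
  · simp only [Preadditive.comp_sub, Preadditive.sub_comp, Category.comp_id,
      Category.id_comp, Category.assoc]
    abel
  · simp only [Preadditive.comp_sub, Preadditive.sub_comp, Category.comp_id,
      Category.id_comp, Category.assoc]
    abel

lemma se_of_eq {X Y : C} {f g : X ⟶ Y} (h : IsStableEquiv f) (e : f = g) :
    IsStableEquiv g := e ▸ h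

/-- two-out-of-three, right cancellation -/
lemma se_cancel_right {X Y Z : C} {f : X ⟶ Y} {g : Y ⟶ Z} (hg : IsStableEquiv g)
    (hfg : IsStableEquiv (f ≫ g)) : IsStableEquiv f := by
  obtain ⟨g', hg1, hg2⟩ := hg
  obtain ⟨h, h1, h2⟩ := hfg
  refine ⟨g ≫ h, ftp_of_eq h1 (by simp), ?_⟩
  have key : (-((g ≫ (h ≫ f)) ≫ (g ≫ g' - 𝟙 Y)) + g ≫ ((h ≫ (f ≫ g) - 𝟙 Z) ≫ g'))
      + (g ≫ g' - 𝟙 Y) = (g ≫ h) ≫ f - 𝟙 Y := by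
    simp only [Preadditive.comp_sub, Preadditive.sub_comp, Category.comp_id,
      Category.id_comp, Category.assoc]
    abel
  exact ftp_of_eq (ftp_add_s11 (ftp_add_s11 (ftp_neg (ftp_precomp hg1 _))
    (ftp_precomp (ftp_postcomp h2 g') g)) hg1) key

/-- two-out-of-three, left cancellation -/
lemma se_cancel_left {X Y Z : C} {e : X ⟶ Y} {x : Y ⟶ Z} (he : IsStableEquiv e)
    (hex : IsStableEquiv (e ≫ x)) : IsStableEquiv x := by
  obtain ⟨e0, he1, he2⟩ := he
  obtain ⟨h, h1, h2⟩ := hex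
  refine ⟨h ≫ e, ?_, ftp_of_eq h2 (by simp)⟩
  have key : (-((e0 ≫ e - 𝟙 Y) ≫ (x ≫ (h ≫ e))) + e0 ≫ (((e ≫ x) ≫ h - 𝟙 X) ≫ e))
      + (e0 ≫ e - 𝟙 Y) = x ≫ (h ≫ e) - 𝟙 Y := by
    simp only [Preadditive.comp_sub, Preadditive.sub_comp, Category.comp_id,
      Category.id_comp, Category.assoc]
    abel
  exact ftp_of_eq (ftp_add_s11 (ftp_add_s11 (ftp_neg (ftp_postcomp he2 _))
    (ftp_precomp (ftp_postcomp h1 e) e0)) he2) key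

lemma projective_of_retract {D P : C} [Projective P] (j : D ⟶ P) (q : P ⟶ D)
    (h : j ≫ q = 𝟙 D) : Projective D := by
  refine ⟨?_⟩
  intro E X f e he
  exact ⟨j ≫ Projective.factorThru (q ≫ f) e, by
    rw [Category.assoc, Projective.factorThru_comp, ← Category.assoc, h, Category.id_comp]⟩

/-- A monic stable equivalence is a split mono with projective cokernel. -/
lemma retraction_of_mono_se (hPI : ∀ P : C, Projective P → Injective P)
    {A A' : C} (α : A ⟶ A') [Mono α] (hα : IsStableEquiv α) :
    ∃ r : A' ⟶ A, α ≫ r = 𝟙 A ∧ Projective (cokernel α) := by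
  obtain ⟨abar, ⟨W₁, hW₁, a₁, b₁, hab⟩, ⟨W₂, hW₂, u, v, huv⟩⟩ := hα
  haveI := hW₁; haveI := hW₂
  haveI : Injective W₁ := hPI _ hW₁
  set r : A' ⟶ A := abar - Injective.factorThru a₁ α ≫ b₁ with hrdef
  have hr : α ≫ r = 𝟙 A := by
    rw [hrdef, Preadditive.comp_sub, ← Category.assoc, Injective.comp_factorThru, hab,
      sub_sub_cancel]
  have h0 : α ≫ cokernel.π α = 0 := cokernel.condition α
  have hq : u ≫ (v ≫ cokernel.π α) = -(cokernel.π α) := by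
    have h1 : (u ≫ v) ≫ cokernel.π α = (abar ≫ α - 𝟙 A') ≫ cokernel.π α := by rw [huv]
    simpa [Preadditive.sub_comp, Category.assoc, h0] using h1
  have hje : α ≫ (𝟙 A' - r ≫ α) = 0 := by
    rw [Preadditive.comp_sub, Category.comp_id, ← Category.assoc, hr, Category.id_comp,
      sub_self]
  set j : cokernel α ⟶ A' := cokernel.desc α (𝟙 A' - r ≫ α) hje with hjdef
  have hπj : cokernel.π α ≫ j = 𝟙 A' - r ≫ α := cokernel.π_desc _ _ _
  have hjπ : j ≫ cokernel.π α = 𝟙 (cokernel α) := by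
    rw [← cancel_epi (cokernel.π α), ← Category.assoc, hπj, Category.comp_id,
      Preadditive.sub_comp, Category.id_comp, Category.assoc, h0, comp_zero, sub_zero]
  have hret : (j ≫ (-u)) ≫ (v ≫ cokernel.π α) = 𝟙 (cokernel α) := by
    rw [Category.assoc, Preadditive.neg_comp, hq, neg_neg, hjπ]
  exact ⟨r, hr, projective_of_retract (j ≫ (-u)) (v ≫ cokernel.π α) hret⟩

lemma B1m (hPI : ∀ P : C, Projective P → Injective P)
    {A B B'' : C} (i : A ⟶ B) [Mono i] (m : B ⟶ B'') [Mono m] (hm : IsStableEquiv m)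
    (i'' : A ⟶ B'') [Mono i''] (him : i ≫ m = i'')
    (γ : cokernel i ⟶ cokernel i'') (hγ : cokernel.π i ≫ γ = m ≫ cokernel.π i'') :
    IsStableEquiv γ := by
  obtain ⟨r, hr, hD⟩ := retraction_of_mono_se hPI m hm
  haveI := hD
  have hiρ : i'' ≫ (r ≫ cokernel.π i) = 0 := by
    rw [← him, Category.assoc, ← Category.assoc m r, hr, Category.id_comp, cokernel.condition]
  set ρ := cokernel.desc i'' (r ≫ cokernel.π i) hiρ with hρdef
  have hπρ : cokernel.π i'' ≫ ρ = r ≫ cokernel.π i := cokernel.π_desc _ _ _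
  have hγρ : γ ≫ ρ = 𝟙 (cokernel i) := by
    rw [← cancel_epi (cokernel.π i), ← Category.assoc, hγ, Category.assoc, hπρ,
      ← Category.assoc, hr, Category.id_comp, Category.comp_id]
  have hme : m ≫ (𝟙 B'' - r ≫ m) = 0 := by
    rw [Preadditive.comp_sub, Category.comp_id, ← Category.assoc, hr, Category.id_comp,
      sub_self]
  set j := cokernel.desc m (𝟙 B'' - r ≫ m) hme with hjdef
  have hπj : cokernel.π m ≫ j = 𝟙 B'' - r ≫ m := cokernel.π_desc _ _ _
  have hcc : i'' ≫ cokernel.π m = 0 := by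
    rw [← him, Category.assoc, cokernel.condition, comp_zero]
  set cbar := cokernel.desc i'' (cokernel.π m) hcc with hcbardef
  have hπc : cokernel.π i'' ≫ cbar = cokernel.π m := cokernel.π_desc _ _ _
  have key : ρ ≫ γ - 𝟙 (cokernel i'') = -(cbar ≫ (j ≫ cokernel.π i'')) := by
    rw [← cancel_epi (cokernel.π i'')]
    have e1 : cokernel.π i'' ≫ (ρ ≫ γ) = r ≫ m ≫ cokernel.π i'' := by
      rw [← Category.assoc, hπρ, Category.assoc, hγ]
    have e2 : cokernel.π i'' ≫ (cbar ≫ (j ≫ cokernel.π i'')) =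
        (𝟙 B'' - r ≫ m) ≫ cokernel.π i'' := by
      rw [← Category.assoc, hπc, ← Category.assoc, hπj]
    simp only [Preadditive.comp_sub, Preadditive.comp_neg, Category.comp_id, e1, e2,
      Preadditive.sub_comp, Category.id_comp, Category.assoc]
    abel
  exact ⟨ρ, ftp_of_eq ftp_zero (by rw [hγρ, sub_self]),
    ftp_of_eq (ftp_neg (ftp_fac hD cbar (j ≫ cokernel.π i''))) key.symm⟩

lemma B1e (hPI : ∀ P : C, Projective P → Injective P)
    {A B' W : C} (i' : A ⟶ B') [Mono i'] (hW : Projective W) (w : A ⟶ W)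
    (γ : cokernel (biprod.lift i' w) ⟶ cokernel i')
    (hγ : cokernel.π (biprod.lift i' w) ≫ γ = biprod.fst ≫ cokernel.π i') :
    IsStableEquiv γ := by
  haveI := hW
  haveI : Injective W := hPI _ hW
  have hτ : i' ≫ Injective.factorThru w i' = w := Injective.comp_factorThru w i'
  set τ : B' ⟶ W := Injective.factorThru w i' with hτdef
  set s : B' ⟶ B' ⊞ W := biprod.lift (𝟙 B') τ with hsdef
  have hs : i' ≫ s = biprod.lift i' w := by
    rw [hsdef]; apply biprod.hom_ext <;> simp [hτ]
  have hcσ : i' ≫ (s ≫ cokernel.π (biprod.lift i' w)) = 0 := by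
    rw [← Category.assoc, hs, cokernel.condition]
  set σ := cokernel.desc i' (s ≫ cokernel.π (biprod.lift i' w)) hcσ with hσdef
  have hπσ : cokernel.π i' ≫ σ = s ≫ cokernel.π (biprod.lift i' w) := cokernel.π_desc _ _ _
  have hσγ : σ ≫ γ = 𝟙 (cokernel i') := by
    rw [← cancel_epi (cokernel.π i'), ← Category.assoc, hπσ, Category.assoc, hγ,
      ← Category.assoc, Category.comp_id]
    rw [hsdef, biprod.lift_fst, Category.id_comp]
  have hζc : biprod.lift i' w ≫ (biprod.snd - biprod.fst ≫ τ) = 0 := by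
    simp [Preadditive.comp_sub, hτ]
  set ζ := cokernel.desc (biprod.lift i' w) (biprod.snd - biprod.fst ≫ τ) hζc with hζdef
  have hπζ : cokernel.π (biprod.lift i' w) ≫ ζ = biprod.snd - biprod.fst ≫ τ :=
    cokernel.π_desc _ _ _
  have key : γ ≫ σ - 𝟙 (cokernel (biprod.lift i' w)) =
      -(ζ ≫ ((biprod.inr : W ⟶ B' ⊞ W) ≫ cokernel.π (biprod.lift i' w))) := by
    rw [← cancel_epi (cokernel.π (biprod.lift i' w))]
    have e1 : cokernel.π (biprod.lift i' w) ≫ (γ ≫ σ) =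
        (biprod.fst ≫ s) ≫ cokernel.π (biprod.lift i' w) := by
      rw [← Category.assoc, hγ, Category.assoc, hπσ, ← Category.assoc, Category.assoc]
    have e2 : biprod.fst ≫ s - 𝟙 (B' ⊞ W) = -((biprod.snd - biprod.fst ≫ τ) ≫ biprod.inr) := by
      rw [hsdef]
      apply biprod.hom_ext <;>
        simp [Preadditive.sub_comp, Preadditive.comp_sub, Category.assoc]
    have e3 : cokernel.π (biprod.lift i' w) ≫
        (ζ ≫ ((biprod.inr : W ⟶ B' ⊞ W) ≫ cokernel.π (biprod.lift i' w))) =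
        ((biprod.snd - biprod.fst ≫ τ) ≫ biprod.inr) ≫ cokernel.π (biprod.lift i' w) := by
      rw [← Category.assoc, hπζ, Category.assoc]
    simp only [Preadditive.comp_sub, Preadditive.comp_neg, Category.comp_id, e1, e3]
    have e4 := congrArg (fun t => t ≫ cokernel.π (biprod.lift i' w)) e2
    simp only [Preadditive.sub_comp, Preadditive.neg_comp, Category.id_comp,
      Category.assoc] at e4 ⊢
    exact e4
  exact ⟨σ, ftp_of_eq (ftp_neg (ftp_fac hW ζ
      ((biprod.inr : W ⟶ B' ⊞ W) ≫ cokernel.π (biprod.lift i' w)))) key.symm,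
    ftp_of_eq ftp_zero (by rw [hσγ, sub_self])⟩

lemma se_biprod_fst {X W : C} (hW : Projective W) :
    IsStableEquiv (biprod.fst : X ⊞ W ⟶ X) := by
  haveI := hW
  refine ⟨biprod.inl, ?_, ftp_of_eq ftp_zero (by simp)⟩
  refine ftp_of_eq (ftp_neg (ftp_fac hW biprod.snd biprod.inr)) ?_
  rw [← biprod.total]; abel

lemma B1 (hPI : ∀ P : C, Projective P → Injective P)
    {A B B' : C} (i : A ⟶ B) [Mono i] (i' : A ⟶ B') [Mono i']
    (β : B ⟶ B') (hβ : IsStableEquiv β) (hcomm : i ≫ β = i')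
    (γ : cokernel i ⟶ cokernel i') (hγ : cokernel.π i ≫ γ = β ≫ cokernel.π i') :
    IsStableEquiv γ := by
  have hβcopy := hβ
  obtain ⟨βb, ⟨W, hW, u, v, huv⟩, hβ2⟩ := hβcopy
  haveI := hW
  set m : B ⟶ B' ⊞ W := biprod.lift β u with hmdef
  haveI hmono : Mono m := by
    apply Preadditive.mono_of_cancel_zero
    intro P g hg
    have h1 : g ≫ β = 0 := by
      have := congrArg (fun t => t ≫ (biprod.fst : B' ⊞ W ⟶ B')) hg
      simpa [hmdef, Category.assoc] using this
    have h2 : g ≫ u = 0 := by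
      have := congrArg (fun t => t ≫ (biprod.snd : B' ⊞ W ⟶ W)) hg
      simpa [hmdef, Category.assoc] using this
    have h3 : g ≫ (β ≫ βb - 𝟙 B) = g ≫ (u ≫ v) := by rw [huv]
    rw [Preadditive.comp_sub, Category.comp_id, ← Category.assoc, ← Category.assoc, h1, h2,
      zero_comp, zero_comp, zero_sub, neg_eq_zero] at h3
    exact h3
  have hmse : IsStableEquiv m :=
    se_cancel_right (se_biprod_fst hW) (se_of_eq hβ (show β = m ≫ biprod.fst by rw [hmdef, biprod.lift_fst]))
  set i'' : A ⟶ B' ⊞ W := biprod.lift i' (i ≫ u) with hi''def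
  haveI : Mono i'' := by rw [hi''def]; infer_instance
  have him : i ≫ m = i'' := by
    rw [hmdef, hi''def]; apply biprod.hom_ext <;> simp [hcomm]
  have hcm : i ≫ (m ≫ cokernel.π i'') = 0 := by
    rw [← Category.assoc, him, cokernel.condition]
  set γm := cokernel.desc i (m ≫ cokernel.π i'') hcm with hγmdef
  have hγmse : IsStableEquiv γm := B1m hPI i m hmse i'' him γm (cokernel.π_desc _ _ _)
  have hcπ : i'' ≫ (biprod.fst ≫ cokernel.π i') = 0 := by
    rw [← Category.assoc, hi''def, biprod.lift_fst, cokernel.condition]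
  set γπ := cokernel.desc i'' (biprod.fst ≫ cokernel.π i') hcπ with hγπdef
  have hγπse : IsStableEquiv γπ := by
    have := B1e hPI i' hW (i ≫ u)
      (cokernel.desc (biprod.lift i' (i ≫ u)) (biprod.fst ≫ cokernel.π i') (by
        rw [← Category.assoc, biprod.lift_fst, cokernel.condition]))
      (cokernel.π_desc _ _ _)
    convert this using 2 <;> rw [hi''def]
  have hfact : γ = γm ≫ γπ := by
    rw [← cancel_epi (cokernel.π i), hγ, ← Category.assoc, hγmdef, cokernel.π_desc,
      Category.assoc, hγπdef, cokernel.π_desc]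
    rw [← Category.assoc, hmdef, biprod.lift_fst]
  exact se_of_eq (se_comp hγmse hγπse) hfact.symm
lemma se_pushout_inl (hPI : ∀ P : C, Projective P → Injective P)
    {A B A' : C} (i : A ⟶ B) [Mono i] (α : A ⟶ A')
    (hα : IsStableEquiv α) : IsStableEquiv (pushout.inl i α) := by
  have hαcopy := hα
  obtain ⟨abar, ⟨W₁, hW₁, a₁, b₁, hab⟩, hα2⟩ := hαcopy
  haveI := hW₁
  set mα : A ⟶ A' ⊞ W₁ := biprod.lift α a₁ with hmα
  haveI : Mono mα := by
    apply Preadditive.mono_of_cancel_zero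
    intro P g hg
    have h1 : g ≫ α = 0 := by
      have := congrArg (fun t => t ≫ (biprod.fst : A' ⊞ W₁ ⟶ A')) hg
      simpa [hmα, Category.assoc] using this
    have h2 : g ≫ a₁ = 0 := by
      have := congrArg (fun t => t ≫ (biprod.snd : A' ⊞ W₁ ⟶ W₁)) hg
      simpa [hmα, Category.assoc] using this
    have h3 : g ≫ (α ≫ abar - 𝟙 A) = g ≫ (a₁ ≫ b₁) := by rw [hab]
    rw [Preadditive.comp_sub, Category.comp_id, ← Category.assoc, ← Category.assoc, h1, h2,
      zero_comp, zero_comp, zero_sub, neg_eq_zero] at h3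
    exact h3
  have hmαse : IsStableEquiv mα :=
    se_cancel_right (se_biprod_fst hW₁)
      (se_of_eq hα (show α = mα ≫ biprod.fst by rw [hmα, biprod.lift_fst]))
  obtain ⟨rα, hrα, hDα⟩ := retraction_of_mono_se hPI mα hmαse
  haveI := hDα
  set tl := pushout.inl i mα with htl
  set tr := pushout.inr i mα with htr
  have hρcond : i ≫ 𝟙 B = mα ≫ (rα ≫ i) := by
    rw [Category.comp_id, ← Category.assoc, hrα, Category.id_comp]
  set ρ := pushout.desc (𝟙 B) (rα ≫ i) hρcond with hρ
  have htlρ : tl ≫ ρ = 𝟙 B := pushout.inl_desc _ _ _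
  have htle : tl ≫ (𝟙 (pushout i mα) - ρ ≫ tl) = 0 := by
    rw [Preadditive.comp_sub, Category.comp_id, ← Category.assoc, htlρ, Category.id_comp,
      sub_self]
  set F := cokernel.desc tl (𝟙 (pushout i mα) - ρ ≫ tl) htle with hF
  -- cokernel tl is projective
  have hθc : mα ≫ (tr ≫ cokernel.π tl) = 0 := by
    rw [← Category.assoc, ← pushout.condition, Category.assoc, cokernel.condition, comp_zero]
  set θ := cokernel.desc mα (tr ≫ cokernel.π tl) hθc with hθ
  have hξc : i ≫ (0 : B ⟶ cokernel mα) = mα ≫ cokernel.π mα := by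
    rw [comp_zero, cokernel.condition]
  set ξ := pushout.desc 0 (cokernel.π mα) hξc with hξ
  have hξtl : tl ≫ ξ = 0 := pushout.inl_desc _ _ _
  set ξbar := cokernel.desc tl ξ hξtl with hξbar
  have hDθ : ξbar ≫ θ = 𝟙 (cokernel tl) := by
    rw [← cancel_epi (cokernel.π tl), ← Category.assoc, cokernel.π_desc, Category.comp_id]
    apply pushout.hom_ext
    · rw [← Category.assoc, hξtl, zero_comp, ← htl, cokernel.condition]
    · rw [← Category.assoc, pushout.inr_desc, cokernel.π_desc]
  haveI hD' : Projective (cokernel tl) := projective_of_retract ξbar θ hDθ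
  have htlse : IsStableEquiv tl := by
    refine ⟨ρ, ftp_of_eq ftp_zero (by rw [htlρ, sub_self]), ?_⟩
    refine ftp_of_eq (ftp_neg (ftp_fac hD' (cokernel.π tl) F)) ?_
    rw [hF, cokernel.π_desc]
    abel
  -- quotient by W₁
  set wα : W₁ ⟶ pushout i mα := biprod.inr ≫ tr with hwα
  haveI : Mono wα := by rw [hwα]; exact mono_comp _ _
  haveI : Injective W₁ := hPI _ hW₁
  set t : pushout i mα ⟶ W₁ := Injective.factorThru (𝟙 W₁) wα with ht
  have hwt : wα ≫ t = 𝟙 W₁ := Injective.comp_factorThru _ _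
  have hκc : wα ≫ (𝟙 (pushout i mα) - t ≫ wα) = 0 := by
    rw [Preadditive.comp_sub, Category.comp_id, ← Category.assoc, hwt, Category.id_comp,
      sub_self]
  set σκ := cokernel.desc wα (𝟙 (pushout i mα) - t ≫ wα) hκc with hσκ
  have hκse : IsStableEquiv (cokernel.π wα) := by
    refine ⟨σκ, ?_, ?_⟩
    · refine ftp_of_eq (ftp_neg (ftp_fac hW₁ t wα)) ?_
      rw [hσκ, cokernel.π_desc]
      abel
    · refine ftp_of_eq ftp_zero ?_
      have h7 : σκ ≫ cokernel.π wα = 𝟙 (cokernel wα) := by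
        rw [← cancel_epi (cokernel.π wα), ← Category.assoc, hσκ, cokernel.π_desc,
          Category.comp_id, Preadditive.sub_comp, Category.id_comp, Category.assoc,
          cokernel.condition, comp_zero, sub_zero]
      rw [h7, sub_self]
  -- the isomorphism with the pushout along α
  set pl := pushout.inl i α with hpl
  set pr := pushout.inr i α with hpr
  have hΨ₀c : i ≫ pl = mα ≫ (biprod.fst ≫ pr) := by
    rw [← Category.assoc, hmα, biprod.lift_fst, hpl, hpr, pushout.condition]
  set Ψ₀ := pushout.desc pl (biprod.fst ≫ pr) hΨ₀c with hΨ₀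
  have hwΨ₀ : wα ≫ Ψ₀ = 0 := by
    rw [hwα, Category.assoc, hΨ₀, pushout.inr_desc, ← Category.assoc, biprod.inr_fst,
      zero_comp]
  set Ψ := cokernel.desc wα Ψ₀ hwΨ₀ with hΨ
  have hκΨ : cokernel.π wα ≫ Ψ = Ψ₀ := cokernel.π_desc _ _ _
  have hmαsplit : mα - α ≫ biprod.inl = a₁ ≫ biprod.inr := by
    rw [hmα, biprod.lift_eq]; abel
  have hΦc : i ≫ (tl ≫ cokernel.π wα) =
      α ≫ ((biprod.inl : A' ⟶ A' ⊞ W₁) ≫ (tr ≫ cokernel.π wα)) := by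
    have h6 : (mα - α ≫ biprod.inl) ≫ (tr ≫ cokernel.π wα) = 0 := by
      rw [hmαsplit, Category.assoc, ← Category.assoc biprod.inr tr, ← hwα,
        ← Category.assoc, Category.assoc, cokernel.condition, comp_zero]
    rw [Preadditive.sub_comp] at h6
    have h8 : mα ≫ (tr ≫ cokernel.π wα) = (α ≫ biprod.inl) ≫ (tr ≫ cokernel.π wα) := by
      rw [← sub_eq_zero]; exact h6
    rw [← Category.assoc, pushout.condition, Category.assoc, h8, Category.assoc]
  set Φ := pushout.desc (tl ≫ cokernel.π wα) (biprod.inl ≫ (tr ≫ cokernel.π wα)) hΦc with hΦ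
  have hΦΨ : Φ ≫ Ψ = 𝟙 (pushout i α) := by
    apply pushout.hom_ext
    · rw [← Category.assoc, hΦ, pushout.inl_desc, Category.assoc, hκΨ, hΨ₀,
        pushout.inl_desc, Category.comp_id]
    · rw [← hpr, Category.comp_id, ← Category.assoc, show pr ≫ Φ =
        biprod.inl ≫ (tr ≫ cokernel.π wα) from pushout.inr_desc _ _ _,
        Category.assoc, Category.assoc, hκΨ,
        show tr ≫ Ψ₀ = biprod.fst ≫ pr from pushout.inr_desc _ _ _,
        ← Category.assoc, biprod.inl_fst, Category.id_comp]
  have hΨΦ : Ψ ≫ Φ = 𝟙 (cokernel wα) := by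
    rw [← cancel_epi (cokernel.π wα), ← Category.assoc, hκΨ, Category.comp_id]
    apply pushout.hom_ext
    · rw [← htl, ← Category.assoc, show tl ≫ Ψ₀ = pl from pushout.inl_desc _ _ _,
        show pl ≫ Φ = tl ≫ cokernel.π wα from pushout.inl_desc _ _ _]
    · rw [← htr, ← Category.assoc, show tr ≫ Ψ₀ = biprod.fst ≫ pr from
        pushout.inr_desc _ _ _, Category.assoc,
        show pr ≫ Φ = biprod.inl ≫ (tr ≫ cokernel.π wα) from pushout.inr_desc _ _ _]
      have h9 : (𝟙 (A' ⊞ W₁) - biprod.fst ≫ biprod.inl) ≫ (tr ≫ cokernel.π wα) = 0 := by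
        rw [show 𝟙 (A' ⊞ W₁) - biprod.fst ≫ biprod.inl =
            biprod.snd ≫ (biprod.inr : W₁ ⟶ A' ⊞ W₁) from by rw [← biprod.total]; abel]
        rw [Category.assoc, ← Category.assoc biprod.inr tr, ← hwα, ← Category.assoc,
          Category.assoc, cokernel.condition, comp_zero]
      rw [Preadditive.sub_comp, Category.id_comp] at h9
      rw [sub_eq_zero] at h9
      conv_rhs => rw [h9]
      simp only [Category.assoc]
  have hΨse : IsStableEquiv Ψ :=
    ⟨Φ, ftp_of_eq ftp_zero (by rw [hΨΦ, sub_self]),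
      ftp_of_eq ftp_zero (by rw [hΦΨ, sub_self])⟩
  have hfinal : (tl ≫ cokernel.π wα) ≫ Ψ = pl := by
    rw [Category.assoc, hκΨ, hΨ₀, pushout.inl_desc]
  have hfinal' : tl ≫ (cokernel.π wα ≫ Ψ) = pl := by rw [← Category.assoc]; exact hfinal
  exact se_of_eq (se_comp (se_comp htlse hκse) hΨse) (by rw [Category.assoc, hfinal'])

lemma lemB (hPI : ∀ P : C, Projective P → Injective P)
    {A B A' B' : C} (i : A ⟶ B) [Mono i] (i' : A' ⟶ B') [Mono i']
    (α : A ⟶ A') (β : B ⟶ B') (hcomm : i ≫ β = α ≫ i')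
    (hα : IsStableEquiv α) (hβ : IsStableEquiv β)
    (γ : cokernel i ⟶ cokernel i') (hγ : cokernel.π i ≫ γ = β ≫ cokernel.π i') :
    IsStableEquiv γ := by
  set pl := pushout.inl i α with hpl
  set pr := pushout.inr i α with hpr
  haveI : Mono pr := by rw [hpr]; infer_instance
  have hγ₀c : i ≫ (pl ≫ cokernel.π pr) = 0 := by
    rw [← Category.assoc, hpl, hpr, pushout.condition, Category.assoc, cokernel.condition,
      comp_zero]
  set γ₀ := cokernel.desc i (pl ≫ cokernel.π pr) hγ₀c with hγ₀
  have hξc : i ≫ cokernel.π i = α ≫ (0 : A' ⟶ cokernel i) := by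
    rw [comp_zero, cokernel.condition]
  set ξ := pushout.desc (cokernel.π i) 0 hξc with hξ
  have hξpr : pr ≫ ξ = 0 := pushout.inr_desc _ _ _
  set γbar := cokernel.desc pr ξ hξpr with hγbar
  have h00 : γ₀ ≫ γbar = 𝟙 (cokernel i) := by
    rw [← cancel_epi (cokernel.π i), ← Category.assoc, hγ₀, cokernel.π_desc, Category.assoc,
      hγbar, cokernel.π_desc, Category.comp_id, hξ, pushout.inl_desc]
  have h01 : γbar ≫ γ₀ = 𝟙 (cokernel pr) := by
    rw [← cancel_epi (cokernel.π pr), ← Category.assoc, hγbar, cokernel.π_desc,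
      Category.comp_id]
    apply pushout.hom_ext
    · rw [← Category.assoc, hξ, pushout.inl_desc, hγ₀, cokernel.π_desc]
    · rw [← Category.assoc, hξ, pushout.inr_desc, zero_comp, cokernel.condition]
  set β₁ := pushout.desc β i' hcomm with hβ₁
  have hβ₁pr : pr ≫ β₁ = i' := pushout.inr_desc _ _ _
  have hplse : IsStableEquiv pl := se_pushout_inl hPI i α hα
  have hβ₁se : IsStableEquiv β₁ := by
    refine se_cancel_left hplse (se_of_eq hβ ?_)
    rw [hβ₁, hpl, pushout.inl_desc]
  have hγ₁c : pr ≫ (β₁ ≫ cokernel.π i') = 0 := by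
    rw [← Category.assoc, hβ₁pr, cokernel.condition]
  set γ₁ := cokernel.desc pr (β₁ ≫ cokernel.π i') hγ₁c with hγ₁def
  have hγ₁se : IsStableEquiv γ₁ := B1 hPI pr i' β₁ hβ₁se hβ₁pr γ₁ (cokernel.π_desc _ _ _)
  have hfact : γ = γ₀ ≫ γ₁ := by
    rw [← cancel_epi (cokernel.π i), hγ, ← Category.assoc, hγ₀, cokernel.π_desc,
      Category.assoc, hγ₁def, cokernel.π_desc, ← Category.assoc, hβ₁, hpl,
      pushout.inl_desc]
  have hγ₀se : IsStableEquiv γ₀ :=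
    ⟨γbar, ftp_of_eq ftp_zero (by rw [h00, sub_self]),
      ftp_of_eq ftp_zero (by rw [h01, sub_self])⟩
  exact se_of_eq (se_comp hγ₀se hγ₁se) hfact.symm
end Aux

/-- homotopy pushouts are well-defined. -/
theorem homotopy_pushouts_well_defined
    {C : Type u} [Category.{v} C] [Abelian C] [EnoughProjectives C]
    [EnoughInjectives C]
    (hPI : ∀ P : C, Projective P → Injective P)
    {X' Y' Z' X Y Z : C}
    (f' : Y' ⟶ X') (g' : Y' ⟶ Z') (f : Y ⟶ X) (g : Y ⟶ Z)
    [Mono f'] [Mono g'] [Mono f] [Mono g]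
    (a : X' ⟶ X) (b : Y' ⟶ Y) (c : Z' ⟶ Z)
    (e₁ : f' ≫ a = b ≫ f) (e₂ : g' ≫ c = b ≫ g)
    (ha : IsStableEquiv a) (hb : IsStableEquiv b) (hc : IsStableEquiv c) :
    IsStableEquiv (pushout.map f' g' f g a c b e₁ e₂) := by
  set i₁ : Y' ⟶ X' ⊞ Z' := biprod.lift f' (-g') with hi₁
  set i₂ : Y ⟶ X ⊞ Z := biprod.lift f (-g) with hi₂
  haveI : Mono i₁ := by rw [hi₁]; infer_instance
  haveI : Mono i₂ := by rw [hi₂]; infer_instance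
  set β : X' ⊞ Z' ⟶ X ⊞ Z := biprod.map a c with hβd
  have hcomm : i₁ ≫ β = b ≫ i₂ := by
    rw [hi₁, hβd, hi₂]
    apply biprod.hom_ext
    · simp [e₁]
    · simp [e₂]
  have hβse : IsStableEquiv β := by
    obtain ⟨a', ha1, ha2⟩ := ha
    obtain ⟨c', hc1, hc2⟩ := hc
    refine ⟨biprod.map a' c', ?_, ?_⟩
    · obtain ⟨P, hP, gP, hP2, hfa⟩ := ha1
      obtain ⟨Q, hQ, gQ, hQ2, hfc⟩ := hc1
      haveI := hP; haveI := hQ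
      refine ⟨P ⊞ Q, inferInstance, biprod.map gP gQ, biprod.map hP2 hQ2, ?_⟩
      rw [hβd]; apply biprod.hom_ext
      · simp only [Category.assoc, biprod.map_fst, Preadditive.sub_comp,
          Preadditive.comp_sub, Category.id_comp, Category.comp_id]
        rw [← Category.assoc, biprod.map_fst, Category.assoc, hfa]
        simp [Preadditive.comp_sub]
      · simp only [Category.assoc, biprod.map_snd, Preadditive.sub_comp,
          Preadditive.comp_sub, Category.id_comp, Category.comp_id]
        rw [← Category.assoc, biprod.map_snd, Category.assoc, hfc]
        simp [Preadditive.comp_sub]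
    · obtain ⟨P, hP, gP, hP2, hfa⟩ := ha2
      obtain ⟨Q, hQ, gQ, hQ2, hfc⟩ := hc2
      haveI := hP; haveI := hQ
      refine ⟨P ⊞ Q, inferInstance, biprod.map gP gQ, biprod.map hP2 hQ2, ?_⟩
      rw [hβd]; apply biprod.hom_ext
      · simp only [Category.assoc, biprod.map_fst, Preadditive.sub_comp,
          Preadditive.comp_sub, Category.id_comp, Category.comp_id]
        rw [← Category.assoc, biprod.map_fst, Category.assoc, hfa]
        simp [Preadditive.comp_sub]
      · simp only [Category.assoc, biprod.map_snd, Preadditive.sub_comp,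
          Preadditive.comp_sub, Category.id_comp, Category.comp_id]
        rw [← Category.assoc, biprod.map_snd, Category.assoc, hfc]
        simp [Preadditive.comp_sub]
  have hγc : i₁ ≫ (β ≫ cokernel.π i₂) = 0 := by
    rw [← Category.assoc, hcomm, Category.assoc, cokernel.condition, comp_zero]
  set γ := cokernel.desc i₁ (β ≫ cokernel.π i₂) hγc with hγd
  have hγse : IsStableEquiv γ := lemB hPI i₁ i₂ b β hcomm hb hβse γ (cokernel.π_desc _ _ _)
  -- the comparison isomorphisms between the cokernels and the pushouts
  have hqc' : i₁ ≫ biprod.desc (pushout.inl f' g') (pushout.inr f' g') = 0 := by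
    rw [hi₁, biprod.lift_desc, Preadditive.neg_comp, pushout.condition]
    abel
  set e' := cokernel.desc i₁ (biprod.desc (pushout.inl f' g') (pushout.inr f' g')) hqc'
    with he'
  have hv'c : f' ≫ ((biprod.inl : X' ⟶ X' ⊞ Z') ≫ cokernel.π i₁) =
      g' ≫ ((biprod.inr : Z' ⟶ X' ⊞ Z') ≫ cokernel.π i₁) := by
    have h : (f' ≫ biprod.inl - g' ≫ biprod.inr) ≫ cokernel.π i₁ = 0 := by
      rw [show f' ≫ biprod.inl - g' ≫ (biprod.inr : Z' ⟶ X' ⊞ Z') = i₁ from by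
        rw [hi₁, biprod.lift_eq, Preadditive.neg_comp]; abel, cokernel.condition]
    rw [Preadditive.sub_comp, sub_eq_zero] at h
    rw [← Category.assoc, ← Category.assoc]
    exact h
  set v' := pushout.desc (biprod.inl ≫ cokernel.π i₁) (biprod.inr ≫ cokernel.π i₁) hv'c
    with hv'
  have he'v' : e' ≫ v' = 𝟙 (cokernel i₁) := by
    rw [← cancel_epi (cokernel.π i₁), ← Category.assoc, he', cokernel.π_desc,
      Category.comp_id]
    apply biprod.hom_ext'
    · rw [← Category.assoc, biprod.inl_desc, hv', pushout.inl_desc]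
    · rw [← Category.assoc, biprod.inr_desc, hv', pushout.inr_desc]
  have hv'e' : v' ≫ e' = 𝟙 (pushout f' g') := by
    apply pushout.hom_ext
    · rw [← Category.assoc, hv', pushout.inl_desc, Category.assoc, he', cokernel.π_desc,
        biprod.inl_desc, Category.comp_id]
    · rw [← Category.assoc, hv', pushout.inr_desc, Category.assoc, he', cokernel.π_desc,
        biprod.inr_desc, Category.comp_id]
  have hqc : i₂ ≫ biprod.desc (pushout.inl f g) (pushout.inr f g) = 0 := by
    rw [hi₂, biprod.lift_desc, Preadditive.neg_comp, pushout.condition]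
    abel
  set e2 := cokernel.desc i₂ (biprod.desc (pushout.inl f g) (pushout.inr f g)) hqc with he2
  have hvc : f ≫ ((biprod.inl : X ⟶ X ⊞ Z) ≫ cokernel.π i₂) =
      g ≫ ((biprod.inr : Z ⟶ X ⊞ Z) ≫ cokernel.π i₂) := by
    have h : (f ≫ biprod.inl - g ≫ biprod.inr) ≫ cokernel.π i₂ = 0 := by
      rw [show f ≫ biprod.inl - g ≫ (biprod.inr : Z ⟶ X ⊞ Z) = i₂ from by
        rw [hi₂, biprod.lift_eq, Preadditive.neg_comp]; abel, cokernel.condition]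
    rw [Preadditive.sub_comp, sub_eq_zero] at h
    rw [← Category.assoc, ← Category.assoc]
    exact h
  set v2 := pushout.desc (biprod.inl ≫ cokernel.π i₂) (biprod.inr ≫ cokernel.π i₂) hvc
    with hv2
  have he2v2 : e2 ≫ v2 = 𝟙 (cokernel i₂) := by
    rw [← cancel_epi (cokernel.π i₂), ← Category.assoc, he2, cokernel.π_desc,
      Category.comp_id]
    apply biprod.hom_ext'
    · rw [← Category.assoc, biprod.inl_desc, hv2, pushout.inl_desc]
    · rw [← Category.assoc, biprod.inr_desc, hv2, pushout.inr_desc]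
  have hv2e2 : v2 ≫ e2 = 𝟙 (pushout f g) := by
    apply pushout.hom_ext
    · rw [← Category.assoc, hv2, pushout.inl_desc, Category.assoc, he2, cokernel.π_desc,
        biprod.inl_desc, Category.comp_id]
    · rw [← Category.assoc, hv2, pushout.inr_desc, Category.assoc, he2, cokernel.π_desc,
        biprod.inr_desc, Category.comp_id]
  have hrel : e' ≫ pushout.map f' g' f g a c b e₁ e₂ = γ ≫ e2 := by
    rw [← cancel_epi (cokernel.π i₁), ← Category.assoc, he', cokernel.π_desc,
      ← Category.assoc, hγd, cokernel.π_desc, Category.assoc,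
      show cokernel.π i₂ ≫ e2 = biprod.desc (pushout.inl f g) (pushout.inr f g) from by
        rw [he2]; exact cokernel.π_desc _ _ _]
    apply biprod.hom_ext'
    · rw [← Category.assoc, biprod.inl_desc, pushout.inl_desc, ← Category.assoc, hβd,
        biprod.inl_map, Category.assoc, biprod.inl_desc]
    · rw [← Category.assoc, biprod.inr_desc, pushout.inr_desc, ← Category.assoc, hβd,
        biprod.inr_map, Category.assoc, biprod.inr_desc]
  have hfactor : pushout.map f' g' f g a c b e₁ e₂ = v' ≫ (γ ≫ e2) := by
    rw [← hrel, ← Category.assoc, hv'e', Category.id_comp]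
  rw [hfactor]
  have hv'se : IsStableEquiv v' :=
    ⟨e', ftp_of_eq ftp_zero (by rw [hv'e', sub_self]),
      ftp_of_eq ftp_zero (by rw [he'v', sub_self])⟩
  have he2se : IsStableEquiv e2 :=
    ⟨v2, ftp_of_eq ftp_zero (by rw [he2v2, sub_self]),
      ftp_of_eq ftp_zero (by rw [hv2e2, sub_self])⟩
  exact se_comp hv'se (se_comp hγse he2se)
end

section
/- Let C be an abelian category with enough projectives and enough injectives, and suppose that every projective object of C is injective. Given a commutative diagram in C with rows the spans X' ← Y' → Z' and X ← Y → Z and vertical maps X' → X, Y' → Y, Z' → Z, such that the maps Y' → X' and Y → X are monomorphisms and all three vertical maps are stable equivalences, the induced map of pushouts X' ⊔_{Y'} Z' → X ⊔_Y Z is a stable equivalence (i.e., C satisfies Waldhausen's axiom Weq 2 with cofibrations the monomorphisms and weak equivalences the stable equivalences). -/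
open CategoryTheory Limits

universe v u

/-!
The pushout of a span whose left leg is a monomorphism is the cokernel in the short exact
sequence `0 ⟶ Y ⟶ X ⊞ Z ⟶ X ⊔_Y Z ⟶ 0`, so it suffices to show that in a morphism of short
exact sequences whose first two components are stable equivalences, so is the third.

Adding to the source the split sequence `R ⟶ R ⊞ Q ⟶ Q`, where `R` and `Q` are projectives mapping
onto the first two terms of the target, makes the first two components epimorphisms; being stable
equivalences, they then have projective, hence injective, kernels. Injectivity of these kernels
lets one choose a section `σ` of the whole morphism `φ` of short complexes, and
`φ ≫ σ - 𝟙` has third component factoring through the projective kernel of `φ.τ₂`.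
-/

namespace FactorsThroughProjective

variable {C : Type u} [Category.{v} C]

theorem of_projective {P Y : C} [Projective P] (f : P ⟶ Y) : FactorsThroughProjective f :=
  ⟨P, inferInstance, 𝟙 P, f, Category.id_comp f⟩

theorem precomp {X Y Z : C} {f : Y ⟶ Z} (hf : FactorsThroughProjective f) (e : X ⟶ Y) :
    FactorsThroughProjective (e ≫ f) := by
  obtain ⟨P, hP, g, h, rfl⟩ := hf
  exact ⟨P, hP, e ≫ g, h, Category.assoc _ _ _⟩

theorem postcomp {X Y Z : C} {f : X ⟶ Y} (hf : FactorsThroughProjective f) (e : Y ⟶ Z) :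
    FactorsThroughProjective (f ≫ e) := by
  obtain ⟨P, hP, g, h, rfl⟩ := hf
  exact ⟨P, hP, g, h ≫ e, (Category.assoc _ _ _).symm⟩

variable [Preadditive C]

open ZeroObject in
theorem zero [HasZeroObject C] {X Y : C} : FactorsThroughProjective (0 : X ⟶ Y) :=
  ⟨0, inferInstance, 0, 0, by simp⟩

theorem neg {X Y : C} {f : X ⟶ Y} (hf : FactorsThroughProjective f) :
    FactorsThroughProjective (-f) := by
  obtain ⟨P, hP, g, h, rfl⟩ := hf
  exact ⟨P, hP, -g, h, Preadditive.neg_comp _ _⟩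

theorem add [HasBinaryBiproducts C] {X Y : C} {f₁ f₂ : X ⟶ Y}
    (h₁ : FactorsThroughProjective f₁) (h₂ : FactorsThroughProjective f₂) :
    FactorsThroughProjective (f₁ + f₂) := by
  obtain ⟨P, hP, g, h, rfl⟩ := h₁
  obtain ⟨Q, hQ, g', h', rfl⟩ := h₂
  exact ⟨P ⊞ Q, inferInstance, biprod.lift g g', biprod.desc h h', by simp⟩

theorem biprod_fst_comp_inl_sub_id [HasBinaryBiproducts C] (X : C) {Q : C} [Projective Q] :
    FactorsThroughProjective ((biprod.fst : X ⊞ Q ⟶ X) ≫ biprod.inl - 𝟙 (X ⊞ Q)) := by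
  have : (biprod.fst : X ⊞ Q ⟶ X) ≫ biprod.inl - 𝟙 (X ⊞ Q) = -(biprod.snd ≫ biprod.inr) := by
    rw [← biprod.total]
    abel
  rw [this]
  exact ((of_projective _).precomp _).neg

end FactorsThroughProjective

namespace IsStableEquiv

variable {C : Type u} [Category.{v} C] [Preadditive C] [HasBinaryBiproducts C]

theorem comp {X Y Z : C} {f : X ⟶ Y} {g : Y ⟶ Z} (hf : IsStableEquiv f)
    (hg : IsStableEquiv g) : IsStableEquiv (f ≫ g) := by
  obtain ⟨h, hfh, hhf⟩ := hf
  obtain ⟨k, hgk, hkg⟩ := hg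
  refine ⟨k ≫ h, ?_, ?_⟩
  · have : (f ≫ g) ≫ k ≫ h - 𝟙 X = (f ≫ (g ≫ k - 𝟙 Y)) ≫ h + (f ≫ h - 𝟙 X) := by
      simp [Preadditive.comp_sub, Preadditive.sub_comp]
    rw [this]
    exact ((hgk.precomp f).postcomp h).add hfh
  · have : (k ≫ h) ≫ f ≫ g - 𝟙 Z = (k ≫ (h ≫ f - 𝟙 Y)) ≫ g + (k ≫ g - 𝟙 Z) := by
      simp [Preadditive.comp_sub, Preadditive.sub_comp]
    rw [this]
    exact ((hhf.precomp k).postcomp g).add hkg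

theorem of_sub {X Y : C} {f g : X ⟶ Y} (hf : IsStableEquiv f)
    (hgf : FactorsThroughProjective (g - f)) : IsStableEquiv g := by
  obtain ⟨h, hfh, hhf⟩ := hf
  refine ⟨h, ?_, ?_⟩
  · have : g ≫ h - 𝟙 X = (g - f) ≫ h + (f ≫ h - 𝟙 X) := by
      simp [Preadditive.sub_comp]
    rw [this]
    exact (hgf.postcomp h).add hfh
  · have : h ≫ g - 𝟙 Y = h ≫ (g - f) + (h ≫ f - 𝟙 Y) := by
      simp [Preadditive.comp_sub]
    rw [this]
    exact (hgf.precomp h).add hhf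

theorem biprod_map {X Y X' Y' : C} {a : X ⟶ X'} {c : Y ⟶ Y'}
    (ha : IsStableEquiv a) (hc : IsStableEquiv c) : IsStableEquiv (biprod.map a c) := by
  obtain ⟨h, hah, hha⟩ := ha
  obtain ⟨k, hck, hkc⟩ := hc
  refine ⟨biprod.map h k, ?_, ?_⟩
  · have : biprod.map a c ≫ biprod.map h k - 𝟙 (X ⊞ Y) =
        (biprod.fst ≫ (a ≫ h - 𝟙 X)) ≫ biprod.inl +
          (biprod.snd ≫ (c ≫ k - 𝟙 Y)) ≫ biprod.inr := by
      ext <;> simp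
    rw [this]
    exact ((hah.precomp _).postcomp _).add ((hck.precomp _).postcomp _)
  · have : biprod.map h k ≫ biprod.map a c - 𝟙 (X' ⊞ Y') =
        (biprod.fst ≫ (h ≫ a - 𝟙 X')) ≫ biprod.inl +
          (biprod.snd ≫ (k ≫ c - 𝟙 Y')) ≫ biprod.inr := by
      ext <;> simp
    rw [this]
    exact ((hha.precomp _).postcomp _).add ((hkc.precomp _).postcomp _)

section ProjectiveSummand

variable (X : C) {Q : C} [Projective Q] [HasZeroObject C]

theorem biprod_fst : IsStableEquiv (biprod.fst : X ⊞ Q ⟶ X) :=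
  ⟨biprod.inl, FactorsThroughProjective.biprod_fst_comp_inl_sub_id X,
    by simpa using FactorsThroughProjective.zero⟩

theorem biprod_inl : IsStableEquiv (biprod.inl : X ⟶ X ⊞ Q) :=
  ⟨biprod.fst, by simpa using FactorsThroughProjective.zero,
    FactorsThroughProjective.biprod_fst_comp_inl_sub_id X⟩

theorem biprod_desc {Y : C} {f : X ⟶ Y} (hf : IsStableEquiv f) (g : Q ⟶ Y) :
    IsStableEquiv (biprod.desc f g) := by
  refine ((biprod_fst X).comp hf).of_sub ?_
  have : biprod.desc f g - biprod.fst ≫ f = biprod.snd ≫ g := by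
    ext <;> simp
  rw [this]
  exact (FactorsThroughProjective.of_projective g).precomp _

end ProjectiveSummand

end IsStableEquiv

section Abelian

variable {C : Type u} [Category.{v} C] [Abelian C]

theorem IsStableEquiv.projective_kernel {M N : C} {f : M ⟶ N} [Epi f] (hf : IsStableEquiv f) :
    Projective (kernel f) := by
  obtain ⟨h, ⟨W, _, u, v, huv⟩, ⟨W', _, u', v', hu'v'⟩⟩ := hf
  let σ := h - u' ≫ Projective.factorThru v' f
  have hσ : σ ≫ f = 𝟙 N := by simp [σ, hu'v']
  let r := kernel.lift f (𝟙 M - f ≫ σ) (by simp [hσ])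
  have hr : kernel.ι f ≫ r = 𝟙 (kernel f) := by
    rw [← cancel_mono (kernel.ι f)]
    simp [r]
  -- `kernel.ι f ≫ (f ≫ h - 𝟙 M) = -kernel.ι f`, so `kernel.ι f` factors through `W`.
  refine Retract.projective ⟨-(kernel.ι f ≫ u), v ≫ r, ?_⟩
  have : kernel.ι f ≫ u ≫ v = -kernel.ι f := by simp [huv]
  rw [Preadditive.neg_comp, Category.assoc, reassoc_of% this, Preadditive.neg_comp, neg_neg, hr]

theorem exists_section_of_injective_kernel {B₁ B₂ : C} (t : B₁ ⟶ B₂) [Epi t]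
    [Injective (kernel t)] : ∃ s : B₂ ⟶ B₁, s ≫ t = 𝟙 B₂ := by
  have hS : (ShortComplex.kernelSequence t).ShortExact :=
    .mk' (ShortComplex.kernelSequence_exact t) inferInstance ‹Epi t›
  have : Injective (ShortComplex.kernelSequence t).X₁ := ‹Injective (kernel t)›
  exact ⟨hS.splittingOfInjective.s, hS.splittingOfInjective.s_g⟩

theorem exists_section_extending {Y B₁ B₂ : C} (t : B₁ ⟶ B₂) [Epi t] [Injective (kernel t)]
    (m : Y ⟶ B₂) [Mono m] (x : Y ⟶ B₁) (hx : x ≫ t = m) :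
    ∃ s : B₂ ⟶ B₁, s ≫ t = 𝟙 B₂ ∧ m ≫ s = x := by
  obtain ⟨s₀, hs₀⟩ := exists_section_of_injective_kernel t
  let k := kernel.lift t (m ≫ s₀ - x) (by simp [hs₀, hx])
  refine ⟨s₀ - Injective.factorThru k m ≫ kernel.ι t, by simp [hs₀], ?_⟩
  simp [k]

namespace CategoryTheory.ShortComplex

noncomputable abbrev biprodMk (S T : ShortComplex C) : ShortComplex C :=
  ShortComplex.mk (biprod.map S.f T.f) (biprod.map S.g T.g) (by ext <;> simp)

theorem ShortExact.biprodMk {S T : ShortComplex C} (hS : S.ShortExact) (hT : T.ShortExact) :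
    (S.biprodMk T).ShortExact := by
  have := hS.mono_f; have := hS.epi_g; have := hT.mono_f; have := hT.epi_g
  refine .mk' ?_ inferInstance inferInstance
  have hS' := hS.exact
  have hT' := hT.exact
  rw [exact_iff_exact_up_to_refinements] at hS' hT' ⊢
  intro A x hx
  obtain ⟨A₁, π₁, _, x₁, h₁⟩ := hS' (x ≫ biprod.fst) (by simpa using hx =≫ biprod.fst)
  obtain ⟨A₂, π₂, _, y₁, h₂⟩ := hT' (π₁ ≫ x ≫ biprod.snd)
    (by simpa using π₁ ≫= hx =≫ biprod.snd)
  refine ⟨A₂, π₂ ≫ π₁, epi_comp _ _, biprod.lift (π₂ ≫ x₁) y₁, ?_⟩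
  apply biprod.hom_ext <;> simp [h₁, h₂]

theorem ShortExact.exists_section_of_epi {S₁ S₂ : ShortComplex C} (h₂ : S₂.ShortExact)
    (φ : S₁ ⟶ S₂) [Epi φ.τ₁] [Epi φ.τ₂] [Injective (kernel φ.τ₁)] [Injective (kernel φ.τ₂)] :
    ∃ σ : S₂ ⟶ S₁, σ ≫ φ = 𝟙 S₂ := by
  have := h₂.mono_f
  have := h₂.epi_g
  obtain ⟨s₁, hs₁⟩ := exists_section_of_injective_kernel φ.τ₁
  obtain ⟨s₂, hs₂, hs₁₂⟩ := exists_section_extending φ.τ₂ S₂.f (s₁ ≫ S₁.f)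
    (by rw [Category.assoc, ← φ.comm₁₂, reassoc_of% hs₁])
  let s₃ := h₂.exact.desc (s₂ ≫ S₁.g) (by rw [reassoc_of% hs₁₂, S₁.zero, comp_zero])
  let σ : S₂ ⟶ S₁ :=
    { τ₁ := s₁, τ₂ := s₂, τ₃ := s₃, comm₁₂ := hs₁₂.symm, comm₂₃ := (h₂.exact.g_desc _ _).symm }
  refine ⟨σ, ?_⟩
  ext
  · exact hs₁
  · exact hs₂
  · rw [← cancel_epi S₂.g]
    change S₂.g ≫ s₃ ≫ φ.τ₃ = S₂.g ≫ 𝟙 _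
    rw [h₂.exact.g_desc_assoc, Category.assoc, ← φ.comm₂₃, reassoc_of% hs₂, Category.comp_id]

theorem ShortExact.exists_τ₃_eq_of_comp_eq_zero {S S₁ S₂ : ShortComplex C} (hS : S.ShortExact)
    (u : S ⟶ S₁) (φ : S₁ ⟶ S₂) [Injective (kernel φ.τ₁)] (hu : u ≫ φ = 0) :
    ∃ v : S.X₃ ⟶ kernel φ.τ₂, u.τ₃ = v ≫ kernel.ι φ.τ₂ ≫ S₁.g := by
  have := hS.mono_f
  have := hS.epi_g
  have hu₁ : u.τ₁ ≫ φ.τ₁ = 0 := by rw [← comp_τ₁, hu, zero_τ₁]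
  have hu₂ : u.τ₂ ≫ φ.τ₂ = 0 := by rw [← comp_τ₂, hu, zero_τ₂]
  let μ := kernel.map φ.τ₁ φ.τ₂ S₁.f S₂.f φ.comm₁₂
  let ρ := kernel.lift φ.τ₁ u.τ₁ hu₁
  let r := kernel.lift φ.τ₂ u.τ₂ hu₂
  have hr : S.f ≫ r = ρ ≫ μ := by
    rw [← cancel_mono (kernel.ι φ.τ₂)]
    simp [r, ρ, μ, u.comm₁₂]
  -- Correcting `r` by an extension of `ρ` along `S.f` makes it vanish on `S.f`.
  let r' := r - Injective.factorThru ρ S.f ≫ μ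
  refine ⟨hS.exact.desc r' (by simp [r', hr]), ?_⟩
  rw [← cancel_epi S.g]
  simp [r', r, μ, u.comm₂₃]

theorem ShortExact.isStableEquiv_τ₃_of_section {S₁ S₂ : ShortComplex C} (h₁ : S₁.ShortExact)
    (φ : S₁ ⟶ S₂) (σ : S₂ ⟶ S₁) (hσ : σ ≫ φ = 𝟙 S₂)
    [Injective (kernel φ.τ₁)] [Projective (kernel φ.τ₂)] : IsStableEquiv φ.τ₃ := by
  obtain ⟨v, hv⟩ := h₁.exists_τ₃_eq_of_comp_eq_zero (φ ≫ σ - 𝟙 S₁) φ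
    (by rw [Preadditive.sub_comp, Category.assoc, hσ]; simp)
  refine ⟨σ.τ₃, ?_, ?_⟩
  · rw [sub_τ₃, comp_τ₃, id_τ₃] at hv
    rw [hv]
    exact (FactorsThroughProjective.of_projective _).precomp v
  · rw [← comp_τ₃, hσ, id_τ₃, sub_self]
    exact FactorsThroughProjective.zero

theorem ShortExact.isStableEquiv_τ₃ [EnoughProjectives C]
    (hPI : ∀ P : C, Projective P → Injective P) {S₁ S₂ : ShortComplex C}
    (h₁ : S₁.ShortExact) (h₂ : S₂.ShortExact) (φ : S₁ ⟶ S₂)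
    (hτ₁ : IsStableEquiv φ.τ₁) (hτ₂ : IsStableEquiv φ.τ₂) : IsStableEquiv φ.τ₃ := by
  let R := Projective.over S₂.X₁
  let Q := Projective.over S₂.X₂
  let T := ShortComplex.mk (biprod.inl : R ⟶ R ⊞ Q) biprod.snd biprod.inl_snd
  let ψ : S₁.biprodMk T ⟶ S₂ :=
    { τ₁ := biprod.desc φ.τ₁ (Projective.π _)
      τ₂ := biprod.desc φ.τ₂ (biprod.desc (Projective.π _ ≫ S₂.f) (Projective.π _))
      τ₃ := biprod.desc φ.τ₃ (Projective.π _ ≫ S₂.g)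
      comm₁₂ := by ext <;> simp [T, φ.comm₁₂]
      comm₂₃ := by ext <;> simp [T, φ.comm₂₃] }
  have : Epi ψ.τ₁ := epi_of_epi_fac (biprod.inr_desc _ _)
  have : Epi ψ.τ₂ :=
    epi_of_epi_fac (show (biprod.inr ≫ biprod.inr) ≫ ψ.τ₂ = Projective.π _ by simp [ψ])
  have : Injective (kernel ψ.τ₁) := hPI _ (hτ₁.biprod_desc _ _).projective_kernel
  have : Projective (kernel ψ.τ₂) := (hτ₂.biprod_desc _ _).projective_kernel
  have : Injective (kernel ψ.τ₂) := hPI _ this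
  have hS₁T : (S₁.biprodMk T).ShortExact :=
    h₁.biprodMk (Splitting.ofHasBinaryBiproduct R Q).shortExact
  obtain ⟨σ, hσ⟩ := h₂.exists_section_of_epi ψ
  have hφψ : φ.τ₃ = biprod.inl ≫ ψ.τ₃ := (biprod.inl_desc _ _).symm
  rw [hφψ]
  exact (IsStableEquiv.biprod_inl _).comp (hS₁T.isStableEquiv_τ₃_of_section ψ σ hσ)

end CategoryTheory.ShortComplex

open Abelian.BiproductToPushoutIsCokernel

noncomputable def pushoutSequence {X Y Z : C} (f : Y ⟶ X) (g : Y ⟶ Z) : ShortComplex C :=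
  ShortComplex.mk (biprod.lift f (-g)) (biprod.desc (pushout.inl f g) (pushout.inr f g))
    (biproductToPushoutCofork f g).condition

theorem pushoutSequence_shortExact {X Y Z : C} (f : Y ⟶ X) (g : Y ⟶ Z) [Mono f] :
    (pushoutSequence f g).ShortExact :=
  .mk' (ShortComplex.exact_of_g_is_cokernel _ (isColimitBiproductToPushout f g))
    (show Mono (biprod.lift f (-g)) from mono_of_mono_fac (biprod.lift_fst f (-g)))
    (epi_of_isColimit_cofork (isColimitBiproductToPushout f g))

noncomputable def pushoutSequenceMap {X' Y' Z' X Y Z : C}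
    (f' : Y' ⟶ X') (g' : Y' ⟶ Z') (f : Y ⟶ X) (g : Y ⟶ Z)
    (a : X' ⟶ X) (c : Z' ⟶ Z) (b : Y' ⟶ Y) (e₁ : f' ≫ a = b ≫ f) (e₂ : g' ≫ c = b ≫ g) :
    pushoutSequence f' g' ⟶ pushoutSequence f g where
  τ₁ := b
  τ₂ := biprod.map a c
  τ₃ := pushout.map f' g' f g a c b e₁ e₂
  comm₁₂ := by apply biprod.hom_ext <;> simp [pushoutSequence, e₁, e₂]
  comm₂₃ := by apply biprod.hom_ext' <;> simp [pushoutSequence, pushout.inl_desc, pushout.inr_desc]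

end Abelian

theorem waldhausen_weq2_general
    {C : Type u} [Category.{v} C] [Abelian C] [EnoughProjectives C]
    (hPI : ∀ P : C, Projective P → Injective P)
    {X' Y' Z' X Y Z : C}
    (f' : Y' ⟶ X') (g' : Y' ⟶ Z') (f : Y ⟶ X) (g : Y ⟶ Z)
    [Mono f'] [Mono f]
    (a : X' ⟶ X) (b : Y' ⟶ Y) (c : Z' ⟶ Z)
    (e₁ : f' ≫ a = b ≫ f) (e₂ : g' ≫ c = b ≫ g)
    (ha : IsStableEquiv a) (hb : IsStableEquiv b) (hc : IsStableEquiv c) :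
    IsStableEquiv (pushout.map f' g' f g a c b e₁ e₂) :=
  (pushoutSequence_shortExact f' g').isStableEquiv_τ₃ hPI (pushoutSequence_shortExact f g)
    (pushoutSequenceMap f' g' f g a c b e₁ e₂) hb (ha.biprod_map hc)

/-- Waldhausen's axiom Weq 2.  Let `C` be an abelian
category with enough projectives and enough injectives in which every
projective object is injective.  Given a commutative diagram whose rows are
the spans `X' ←f'− Y' −g'→ Z'` and `X ←f− Y −g→ Z` such that `f' : Y' ⟶ X'`
and `f : Y ⟶ X` are monomorphisms, and whose vertical maps `a : X' ⟶ X`,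
`b : Y' ⟶ Y`, `c : Z' ⟶ Z` are stable equivalences, the induced map of
pushouts `X' ⊔_{Y'} Z' ⟶ X ⊔_Y Z` is a stable equivalence. -/
theorem waldhausen_weq2
    {C : Type u} [Category.{v} C] [Abelian C] [EnoughProjectives C]
    [EnoughInjectives C]
    (hPI : ∀ P : C, Projective P → Injective P)
    {X' Y' Z' X Y Z : C}
    (f' : Y' ⟶ X') (g' : Y' ⟶ Z') (f : Y ⟶ X) (g : Y ⟶ Z)
    [Mono f'] [Mono f]
    (a : X' ⟶ X) (b : Y' ⟶ Y) (c : Z' ⟶ Z)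
    (e₁ : f' ≫ a = b ≫ f) (e₂ : g' ≫ c = b ≫ g)
    (ha : IsStableEquiv a) (hb : IsStableEquiv b) (hc : IsStableEquiv c) :
    IsStableEquiv (pushout.map f' g' f g a c b e₁ e₂) :=
  waldhausen_weq2_general hPI f' g' f g a b c e₁ e₂ ha hb hc
end

section
/- Let C be an abelian category with enough projectives and enough injectives, in which every projective object is injective. Let X, Y be objects of C, let f : X ⟶ Y be a morphism, and let i : X ⟶ P be a monomorphism with P projective. Define f₀ : X ⟶ P ⊕ Y to be the morphism with components (i, f), and f₁ : P ⊕ Y ⟶ Y the projection to the second summand. Then: (1) f₀ is a monomorphism, f₁ is a stable equivalence, and f = f₁ ∘ f₀; and (2) the pushout P ⊔_X (P ⊕ Y) of f₀ along i is stably equivalent to the pushout P ⊔_X Y of f along i, via the map induced by f₁. -/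
open CategoryTheory Limits

universe v u

/- The projection `biprod.snd : P ⊞ Y ⟶ Y` has the section `biprod.inr`, and the complementary
idempotent `𝟙 - biprod.snd ≫ biprod.inr = biprod.fst ≫ biprod.inl` factors through `P`. The same
persists after pushing out along `i`: the induced map `P ⊔_X (P ⊞ Y) ⟶ P ⊔_X Y` has a section, and
the complementary idempotent factors through `P` via the map `P ⊔_X (P ⊞ Y) ⟶ P` induced by
`(𝟙 P, biprod.fst)`. -/

open Preadditive
open scoped ZeroObject

section StableEquivalence

variable {C : Type u} [Category.{v} C] [Preadditive C]

lemma FactorsThroughProjective.neg_s15 {X Y : C} {g : X ⟶ Y} (h : FactorsThroughProjective g) :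
    FactorsThroughProjective (-g) := by
  obtain ⟨P, hP, a, b, rfl⟩ := h
  exact ⟨P, hP, -a, b, neg_comp a b⟩

lemma factorsThroughProjective_zero [HasZeroObject C] (X Y : C) :
    FactorsThroughProjective (0 : X ⟶ Y) :=
  ⟨0, Projective.zero_projective, 0, 0, zero_comp⟩

lemma isStableEquiv_of_section [HasZeroObject C] {A B : C} {f : A ⟶ B} (s : B ⟶ A)
    (hs : s ≫ f = 𝟙 B) (h : FactorsThroughProjective (𝟙 A - f ≫ s)) : IsStableEquiv f :=
  ⟨s, neg_sub (𝟙 A) (f ≫ s) ▸ h.neg_s15, by rw [hs, sub_self]; exact factorsThroughProjective_zero B B⟩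

lemma isStableEquiv_biprod_snd [HasZeroObject C] {P Y : C} [HasBinaryBiproduct P Y]
    (hP : Projective P) : IsStableEquiv (biprod.snd : P ⊞ Y ⟶ Y) :=
  isStableEquiv_of_section biprod.inr biprod.inr_snd
    ⟨P, hP, biprod.fst, biprod.inl, by rw [← biprod.total, add_sub_cancel_right]⟩

end StableEquivalence

section SimplePushout

variable {C : Type u} [Category.{v} C] [Preadditive C] [HasBinaryBiproducts C] [HasPushouts C]
  {X Y P : C} (i : X ⟶ P) (f : X ⟶ Y)

/- The correction term `- biprod.inl ≫ pushout.inr` on `P` makes the square commute, because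
`biprod.lift i f = i ≫ biprod.inl + f ≫ biprod.inr`. -/
noncomputable def pushoutBiprodSection : pushout i f ⟶ pushout i (biprod.lift i f) :=
  pushout.desc (pushout.inl _ _ - biprod.inl ≫ pushout.inr _ _) (biprod.inr ≫ pushout.inr _ _) <| by
    rw [comp_sub, pushout.condition, biprod.lift_eq]
    simp only [add_comp, Category.assoc, add_sub_cancel_left]

lemma pushoutBiprodSection_comp_map :
    pushoutBiprodSection i f ≫ pushout.map i (biprod.lift i f) i f (𝟙 P) biprod.snd (𝟙 X)
      (by simp) (by simp) = 𝟙 _ := by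
  ext <;> simp [pushoutBiprodSection, pushout.inl_desc, pushout.inr_desc,
    pushout.inl_desc_assoc, pushout.inr_desc_assoc]

lemma id_sub_map_comp_pushoutBiprodSection :
    𝟙 _ - pushout.map i (biprod.lift i f) i f (𝟙 P) biprod.snd (𝟙 X) (by simp) (by simp) ≫
      pushoutBiprodSection i f =
      pushout.desc (𝟙 P) biprod.fst (by simp) ≫ biprod.inl ≫ pushout.inr _ _ := by
  ext <;> simp [pushoutBiprodSection, pushout.inl_desc, pushout.inr_desc,
    pushout.inl_desc_assoc, pushout.inr_desc_assoc]

lemma isStableEquiv_pushout_map_biprod_snd [HasZeroObject C] (hP : Projective P) :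
    IsStableEquiv (pushout.map i (biprod.lift i f) i f (𝟙 P) biprod.snd (𝟙 X)
      (by simp) (by simp)) :=
  isStableEquiv_of_section _ (pushoutBiprodSection_comp_map i f)
    ⟨P, hP, _, _, (id_sub_map_comp_pushoutBiprodSection i f).symm⟩

end SimplePushout

/-- simple pushouts.  Let `C` be an abelian category with
enough projectives and enough injectives in which every projective object is
injective.  Let `f : X ⟶ Y` be a morphism and `i : X ⟶ P` a monomorphism with
`P` projective.  Let `f₀ = (i, f) : X ⟶ P ⊞ Y` and `f₁ : P ⊞ Y ⟶ Y` the
projection to the second summand.  Then `f₀` is a monomorphism, `f₁` is a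
stable equivalence, `f = f₁ ∘ f₀`, and the induced map of pushouts
`P ⊔_X (P ⊞ Y) ⟶ P ⊔_X Y` (of `f₀`, resp. `f`, along `i`, induced by `f₁`)
is a stable equivalence. -/
theorem simple_pushouts
    {C : Type u} [Category.{v} C] [Abelian C]
    {X Y P : C} (hP : Projective P) (f : X ⟶ Y) (i : X ⟶ P) [Mono i] :
    Mono (biprod.lift i f) ∧
    IsStableEquiv (biprod.snd : P ⊞ Y ⟶ Y) ∧
    biprod.lift i f ≫ biprod.snd = f ∧
    IsStableEquiv (pushout.map i (biprod.lift i f) i f (𝟙 P)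
      (biprod.snd : P ⊞ Y ⟶ Y) (𝟙 X) (by simp) (by simp)) :=
  ⟨inferInstance, isStableEquiv_biprod_snd hP, biprod.lift_snd i f,
    isStableEquiv_pushout_map_biprod_snd i f hP⟩
end
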